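/- For m ≥ 1, let M be the (m+1)×(m+1) integer matrix with M₁₁ = −m+1, M_{ii} = −m−2 for 2 ≤ i ≤ m+1, M₁ⱼ = Mⱼ₁ = −m for 2 ≤ j ≤ m+1, M_{ij} = −m−1 otherwise; let L = (1, …, 1)ᵀ and C = (−m+1, −m+2, …, −m+2)ᵀ. Then for the unique rational solution v of M·v = L, one has ⟨C, v⟩ = 1 − 2m, and consequently the new rotation number rot_new(K₀) = rot(K₀) − ⟨C, v⟩ = 0 − (1 − 2m) = 2m − 1. -/

import Mathlib

/-- For any rational solution `v` of `M·v = L`, one has `⟨C, v⟩ = 1 - 2m`, so the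
new rotation number is `rot_new(K₀) = 0 - ⟨C, v⟩ = 2m - 1`. -/
theorem stmt_7 (m : ℕ) (hm : 1 ≤ m)
    (M : Matrix (Fin (m + 1)) (Fin (m + 1)) ℚ)
    (hM : M = Matrix.of fun i j =>
      if i = 0 ∧ j = 0 then -(m : ℚ) + 1
      else if i = 0 ∨ j = 0 then -(m : ℚ)
      else if i = j then -(m : ℚ) - 2
      else -(m : ℚ) - 1)
    (L C : Fin (m + 1) → ℚ)
    (hL : L = fun _ => 1)
    (hC : C = fun i => if i = 0 then -(m : ℚ) + 1 else -(m : ℚ) + 2)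
    (v : Fin (m + 1) → ℚ) (hv : M.mulVec v = L) :
    dotProduct C v = 1 - 2 * m ∧
      0 - dotProduct C v = 2 * m - 1 := by
  set w : Fin (m + 1) → ℚ :=
    fun i => if i = 0 then 1 - 2 * (m : ℚ) ^ 2 else 2 * ((m : ℚ) - 1) with hw
  have hwM : Matrix.vecMul w M = C := by
    funext j
    rcases eq_or_ne j 0 with rfl | hj
    · simp only [Matrix.vecMul, dotProduct, hM, hw, Matrix.of_apply, hC]
      rw [Fin.sum_univ_succ]
      simp [Fin.succ_ne_zero, Finset.sum_const]
      push_cast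
      ring
    · obtain ⟨j', rfl⟩ := Fin.exists_succ_eq.mpr hj
      simp only [Matrix.vecMul, dotProduct, hM, hw, Matrix.of_apply, hC]
      have hterm : ∀ i : Fin m,
          (if i.succ = 0 then (1 : ℚ) - 2 * (m : ℚ) ^ 2 else 2 * ((m : ℚ) - 1)) *
            (if i.succ = 0 ∧ j'.succ = 0 then -(m : ℚ) + 1
              else if i.succ = 0 ∨ j'.succ = 0 then -(m : ℚ)
              else if i.succ = j'.succ then -(m : ℚ) - 2
              else -(m : ℚ) - 1)
          = (if i = j' then 2 * ((m : ℚ) - 1) * (-(m : ℚ) - 2) - 2 * ((m : ℚ) - 1) * (-(m : ℚ) - 1) else 0)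
              + 2 * ((m : ℚ) - 1) * (-(m : ℚ) - 1) := by
        intro i
        simp only [Fin.succ_ne_zero, if_neg, Fin.succ_inj, false_and, if_false,
          false_or, Fin.succ_ne_zero j']
        rcases eq_or_ne i j' with rfl | h
        · simp
        · simp [h]
      rw [Fin.sum_univ_succ]
      rw [Finset.sum_congr rfl (fun i _ => hterm i), Finset.sum_add_distrib,
        Finset.sum_ite_eq' Finset.univ j']
      simp [Fin.succ_ne_zero]
      push_cast
      ring
  have key : dotProduct C v = 1 - 2 * (m : ℚ) := by
    rw [← hwM, ← Matrix.dotProduct_mulVec, hv, hL]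
    simp only [dotProduct, hw, mul_one]
    rw [Fin.sum_univ_succ]
    simp [Fin.succ_ne_zero, Finset.sum_const]
    push_cast
    ring
  exact ⟨key, by rw [key]; ring⟩
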